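/- Under the Lipschitz assumption ‖v_t(x) - v_{t̃}(x̃)‖ ≤ L(‖x - x̃‖ + W₂(μ_t, μ_{t̃})) and a uniform bound ‖v_t‖ ≤ B, the piecewise-constant forward Euler interpolation μ_t^s of the gradient flow satisfies sup_{t∈[0,T]} W₂(μ_t, μ_t^s) ≤ C·s for some constant C depending only on L, B, T. -/

import Mathlib

open MeasureTheory

/-- The quadratic Wasserstein distance on `ℝ^m`. -/
noncomputable def W2 {m : ℕ} (μ ν : Measure (EuclideanSpace ℝ (Fin m))) : ℝ :=
  sInf {c : ℝ | ∃ γ : Measure (EuclideanSpace ℝ (Fin m) × EuclideanSpace ℝ (Fin m)),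
    γ.map Prod.fst = μ ∧ γ.map Prod.snd = ν ∧
    c = Real.sqrt (∫ z, ‖z.1 - z.2‖ ^ 2 ∂γ)}

/-- The forward Euler measures `μ_{k+1} = (Id + s v_{ks})_# μ_k`. -/
noncomputable def eulerMeas {m : ℕ} (v : ℝ → EuclideanSpace ℝ (Fin m) → EuclideanSpace ℝ (Fin m))
    (μ0 : Measure (EuclideanSpace ℝ (Fin m))) (s : ℝ) : ℕ → Measure (EuclideanSpace ℝ (Fin m))
  | 0 => μ0
  | (k + 1) => (eulerMeas v μ0 s k).map (fun x => x + s • v ((k : ℝ) * s) x)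

/-- The piecewise-constant-velocity interpolation
`μ_t^s = (Id + (t - ks) v_{ks})_# μ_k` for `t ∈ [ks, (k+1)s)`, with `k = ⌊t/s⌋`. -/
noncomputable def eulerInterp {m : ℕ} (v : ℝ → EuclideanSpace ℝ (Fin m) → EuclideanSpace ℝ (Fin m))
    (μ0 : Measure (EuclideanSpace ℝ (Fin m))) (s t : ℝ) : Measure (EuclideanSpace ℝ (Fin m)) :=
  (eulerMeas v μ0 s ⌊t / s⌋₊).map
    (fun x => x + (t - (⌊t / s⌋₊ : ℝ) * s) • v ((⌊t / s⌋₊ : ℝ) * s) x)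


/-!
Along the flow, a particle moves with speed at most `B`, so `W₂(μ_a, μ_t) ≤ B |t - a|` and the
joint Lipschitz bound on `v` becomes a bound `L (‖x - y‖ + B |t - a|)` in space and time only.
Follow one particle `X_t x` and its Euler iterates `Y_k x`: the coupling `x ↦ (X_t x, Y x)` of
`μ_t` and `μ_t^s` reduces the claim to a pointwise bound. On one step the velocity error is at
most `L (e_k + 2 B s)`, so `e_{k+1} ≤ (1 + L s) e_k + 2 L B s²`, and discrete Grönwall gives
`e_k ≤ 2 B s ((1 + L s)^k - 1) ≤ 2 B s (e^{L T} - 1)`; the final partial step adds at most `2 B s`.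
-/

open Set

lemma W2_le_of_map_fst_of_map_snd {m : ℕ} {μ ν : Measure (EuclideanSpace ℝ (Fin m))}
    (γ : Measure (EuclideanSpace ℝ (Fin m) × EuclideanSpace ℝ (Fin m)))
    (h₁ : γ.map Prod.fst = μ) (h₂ : γ.map Prod.snd = ν) :
    W2 μ ν ≤ √(∫ z, ‖z.1 - z.2‖ ^ 2 ∂γ) :=
  csInf_le ⟨0, by rintro c ⟨γ', -, -, rfl⟩; exact Real.sqrt_nonneg _⟩ ⟨γ, h₁, h₂, rfl⟩

lemma W2_map_le_of_norm_sub_le {α : Type*} [MeasurableSpace α] {m : ℕ} (ν : Measure α)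
    [IsProbabilityMeasure ν] {φ ψ : α → EuclideanSpace ℝ (Fin m)} (hφ : AEMeasurable φ ν)
    (hψ : AEMeasurable ψ ν) {D : ℝ} (hD : 0 ≤ D) (h : ∀ x, ‖φ x - ψ x‖ ≤ D) :
    W2 (ν.map φ) (ν.map ψ) ≤ D := by
  have hpair : AEMeasurable (fun x => (φ x, ψ x)) ν := hφ.prodMk hψ
  have hmarg₁ : (ν.map fun x => (φ x, ψ x)).map Prod.fst = ν.map φ := by
    rw [AEMeasurable.map_map_of_aemeasurable measurable_fst.aemeasurable hpair]; rfl
  have hmarg₂ : (ν.map fun x => (φ x, ψ x)).map Prod.snd = ν.map ψ := by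
    rw [AEMeasurable.map_map_of_aemeasurable measurable_snd.aemeasurable hpair]; rfl
  have hcost : ∫ x, ‖φ x - ψ x‖ ^ 2 ∂ν ≤ D ^ 2 := by
    calc ∫ x, ‖φ x - ψ x‖ ^ 2 ∂ν ≤ ∫ _, D ^ 2 ∂ν :=
          integral_mono_of_nonneg (.of_forall fun _ => by positivity) (integrable_const _)
            (.of_forall fun x => pow_le_pow_left₀ (norm_nonneg _) (h x) 2)
      _ = D ^ 2 := by simp
  calc W2 (ν.map φ) (ν.map ψ) ≤ √(∫ z, ‖z.1 - z.2‖ ^ 2 ∂ν.map fun x => (φ x, ψ x)) :=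
        W2_le_of_map_fst_of_map_snd _ hmarg₁ hmarg₂
    _ = √(∫ x, ‖φ x - ψ x‖ ^ 2 ∂ν) := by
        rw [integral_map hpair (by fun_prop)]
    _ ≤ √(D ^ 2) := Real.sqrt_le_sqrt hcost
    _ = D := Real.sqrt_sq hD

lemma natFloor_div_mul_le {t s : ℝ} (ht : 0 ≤ t) (hs : 0 < s) : (⌊t / s⌋₊ : ℝ) * s ≤ t :=
  (le_div_iff₀ hs).1 (Nat.floor_le (div_nonneg ht hs.le))

lemma sub_natFloor_div_mul_lt (t : ℝ) {s : ℝ} (hs : 0 < s) : t - ⌊t / s⌋₊ * s < s := by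
  have := (div_lt_iff₀ hs).1 (Nat.lt_floor_add_one (t / s))
  linarith

lemma le_of_discrete_gronwall {e : ℕ → ℝ} {δ K : ℝ} (hδ : -1 ≤ δ) (h₀ : e 0 ≤ 0) {n : ℕ}
    (hstep : ∀ j < n, e (j + 1) ≤ (1 + δ) * e j + δ * K) :
    e n ≤ K * ((1 + δ) ^ n - 1) := by
  induction n with
  | zero => simpa using h₀
  | succ n ih =>
    have ih' := ih fun j hj => hstep j (Nat.lt_succ_of_lt hj)
    calc e (n + 1) ≤ (1 + δ) * e n + δ * K := hstep n (Nat.lt_succ_self n)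
      _ ≤ (1 + δ) * (K * ((1 + δ) ^ n - 1)) + δ * K := by gcongr; linarith
      _ = K * ((1 + δ) ^ (n + 1) - 1) := by ring

lemma one_add_pow_le_exp_mul {δ : ℝ} (hδ : -1 ≤ δ) (n : ℕ) : (1 + δ) ^ n ≤ Real.exp (n * δ) := by
  rw [Real.exp_nat_mul]
  exact pow_le_pow_left₀ (by linarith) (by linarith [Real.add_one_le_exp δ]) n

section EulerScheme

variable {E : Type*}

noncomputable def eulerMap [AddCommGroup E] [Module ℝ E] (v : ℝ → E → E) (s : ℝ) : ℕ → E → E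
  | 0 => id
  | k + 1 => fun x => eulerMap v s k x + s • v (k * s) (eulerMap v s k x)

noncomputable def eulerInterpMap [AddCommGroup E] [Module ℝ E] (v : ℝ → E → E) (s t : ℝ) (x : E) :
    E :=
  eulerMap v s ⌊t / s⌋₊ x + (t - ⌊t / s⌋₊ * s) • v (⌊t / s⌋₊ * s) (eulerMap v s ⌊t / s⌋₊ x)

variable [NormedAddCommGroup E] [NormedSpace ℝ E] {v : ℝ → E → E} {s : ℝ}

lemma continuous_eulerMap {k : ℕ} (hv : ∀ j < k, Continuous (v (j * s))) :
    Continuous (eulerMap v s k) := by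
  induction k with
  | zero => exact continuous_id
  | succ k ih =>
    have hk := ih fun j hj => hv j (Nat.lt_succ_of_lt hj)
    exact hk.add ((hv k (Nat.lt_succ_self k)).comp hk |>.const_smul s)

lemma continuous_eulerInterpMap {t : ℝ} (hv : ∀ j ≤ ⌊t / s⌋₊, Continuous (v (j * s))) :
    Continuous (eulerInterpMap v s t) := by
  have hk := continuous_eulerMap fun j hj => hv j hj.le
  exact hk.add ((hv _ le_rfl).comp hk |>.const_smul _)

lemma norm_sub_le_mul_of_hasDerivAt {f f' : ℝ → E} {B a b : ℝ}
    (hf : ∀ t, HasDerivAt f (f' t) t) (hB : ∀ t, ‖f' t‖ ≤ B) (hab : a ≤ b) :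
    ‖f b - f a‖ ≤ B * (b - a) :=
  norm_image_sub_le_of_norm_deriv_le_segment' (fun t _ => (hf t).hasDerivWithinAt)
    (fun t _ => hB t) b (right_mem_Icc.2 hab)

lemma norm_sub_add_smul_le {f f' : ℝ → E} {a b M : ℝ} (hf : ∀ t, HasDerivAt f (f' t) t)
    (hab : a ≤ b) (y w : E) (hM : ∀ t ∈ Ico a b, ‖f' t - w‖ ≤ M) :
    ‖f b - (y + (b - a) • w)‖ ≤ ‖f a - y‖ + M * (b - a) := by
  have hg : ∀ t ∈ Icc a b, HasDerivWithinAt (fun t => f t - (t - a) • w) (f' t - w) (Icc a b) t :=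
    fun t _ => by
      have h := (hf t).sub (((hasDerivAt_id t).sub_const a).smul_const w)
      rw [one_smul] at h
      exact h.hasDerivWithinAt
  have hmv := norm_image_sub_le_of_norm_deriv_le_segment' hg hM b (right_mem_Icc.2 hab)
  calc ‖f b - (y + (b - a) • w)‖
      = ‖(f b - (b - a) • w - (f a - (a - a) • w)) + (f a - y)‖ := by
        congr 1; simp only [sub_self, zero_smul, sub_zero]; abel
    _ ≤ ‖f a - y‖ + M * (b - a) := (norm_add_le _ _).trans (by linarith)

variable {γ : ℝ → E} {B L T : ℝ}

lemma norm_sub_eulerMap_succ_le (hL : 0 ≤ L) (hs : 0 ≤ s)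
    (hγ : ∀ t, HasDerivAt γ (v t (γ t)) t) (hbound : ∀ t x, ‖v t x‖ ≤ B)
    (hlip : ∀ a t, a ∈ Icc 0 T → t ∈ Icc 0 T → a ≤ t → ∀ x y,
      ‖v t x - v a y‖ ≤ L * (‖x - y‖ + B * (t - a)))
    {j : ℕ} (hj : (j + 1 : ℝ) * s ≤ T) :
    ‖γ ((j + 1 : ℕ) * s) - eulerMap v s (j + 1) (γ 0)‖
      ≤ (1 + L * s) * ‖γ (j * s) - eulerMap v s j (γ 0)‖ + L * s * (2 * B * s) := by
  set e := ‖γ (j * s) - eulerMap v s j (γ 0)‖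
  set y := eulerMap v s j (γ 0)
  have hB : 0 ≤ B := (norm_nonneg _).trans (hbound 0 0)
  have hja : (j : ℝ) * s ∈ Icc 0 T := ⟨by positivity, by nlinarith⟩
  have hM : ∀ t ∈ Ico ((j : ℝ) * s) ((j + 1 : ℕ) * s),
      ‖v t (γ t) - v (j * s) y‖ ≤ L * (e + 2 * B * s) := by
    intro t ht
    push_cast at ht
    have hspeed := norm_sub_le_mul_of_hasDerivAt hγ (fun t => hbound t (γ t)) ht.1
    have hdist : ‖γ t - y‖ ≤ ‖γ t - γ (j * s)‖ + e := norm_sub_le_norm_sub_add_norm_sub _ _ _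
    have hBt : B * (t - j * s) ≤ B * s := mul_le_mul_of_nonneg_left (by linarith [ht.2]) hB
    calc ‖v t (γ t) - v (j * s) y‖ ≤ L * (‖γ t - y‖ + B * (t - j * s)) :=
          hlip _ t hja ⟨hja.1.trans ht.1, by linarith [ht.2]⟩ ht.1 _ _
      _ ≤ L * (e + 2 * B * s) := mul_le_mul_of_nonneg_left (by linarith) hL
  have hstep := norm_sub_add_smul_le hγ (by push_cast; nlinarith) y (v (j * s) y) hM
  have hlen : ((j + 1 : ℕ) : ℝ) * s - j * s = s := by push_cast; ring
  rw [hlen] at hstep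
  calc ‖γ ((j + 1 : ℕ) * s) - eulerMap v s (j + 1) (γ 0)‖ ≤ e + L * (e + 2 * B * s) * s := hstep
    _ = (1 + L * s) * e + L * s * (2 * B * s) := by ring

lemma norm_sub_eulerMap_le (hL : 0 ≤ L) (hs : 0 ≤ s)
    (hγ : ∀ t, HasDerivAt γ (v t (γ t)) t) (hbound : ∀ t x, ‖v t x‖ ≤ B)
    (hlip : ∀ a t, a ∈ Icc 0 T → t ∈ Icc 0 T → a ≤ t → ∀ x y,
      ‖v t x - v a y‖ ≤ L * (‖x - y‖ + B * (t - a)))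
    {k : ℕ} (hk : k * s ≤ T) :
    ‖γ (k * s) - eulerMap v s k (γ 0)‖ ≤ 2 * B * s * ((1 + L * s) ^ k - 1) := by
  refine le_of_discrete_gronwall (e := fun j => ‖γ (j * s) - eulerMap v s j (γ 0)‖)
    (by nlinarith) (by simp [eulerMap]) fun j hj => ?_
  refine norm_sub_eulerMap_succ_le hL hs hγ hbound hlip (le_trans ?_ hk)
  exact mul_le_mul_of_nonneg_right (by exact_mod_cast hj) hs

lemma norm_sub_eulerInterpMap_le (hL : 0 ≤ L) (hs : 0 < s)
    (hγ : ∀ t, HasDerivAt γ (v t (γ t)) t) (hbound : ∀ t x, ‖v t x‖ ≤ B)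
    (hlip : ∀ a t, a ∈ Icc 0 T → t ∈ Icc 0 T → a ≤ t → ∀ x y,
      ‖v t x - v a y‖ ≤ L * (‖x - y‖ + B * (t - a)))
    {t : ℝ} (ht : t ∈ Icc 0 T) :
    ‖γ t - eulerInterpMap v s t (γ 0)‖ ≤ 2 * B * Real.exp (L * T) * s := by
  set k := ⌊t / s⌋₊
  have hB : 0 ≤ B := (norm_nonneg _).trans (hbound 0 0)
  have hkt : (k : ℝ) * s ≤ t := natFloor_div_mul_le ht.1 hs
  have hgrid := norm_sub_eulerMap_le hL hs.le hγ hbound hlip (hkt.trans ht.2)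
  -- the last, partial step only needs the crude velocity error `‖v - w‖ ≤ 2 B`
  have hlast := norm_sub_add_smul_le hγ hkt (eulerMap v s k (γ 0))
    (v (k * s) (eulerMap v s k (γ 0))) (M := 2 * B) fun τ _ =>
      (norm_sub_le _ _).trans (by linarith [hbound τ (γ τ), hbound (k * s) (eulerMap v s k (γ 0))])
  have hexp : (1 + L * s) ^ k ≤ Real.exp (L * T) :=
    (one_add_pow_le_exp_mul (by nlinarith) k).trans
      (Real.exp_le_exp.2 (by nlinarith [hkt.trans ht.2]))
  calc ‖γ t - eulerInterpMap v s t (γ 0)‖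
      ≤ 2 * B * s * ((1 + L * s) ^ k - 1) + 2 * B * (t - k * s) := hlast.trans (by gcongr)
    _ ≤ 2 * B * s * ((1 + L * s) ^ k - 1) + 2 * B * s := by
        gcongr; exact (sub_natFloor_div_mul_lt t hs).le
    _ = 2 * B * s * (1 + L * s) ^ k := by ring
    _ ≤ 2 * B * s * Real.exp (L * T) := by gcongr
    _ = 2 * B * Real.exp (L * T) * s := by ring

end EulerScheme

lemma eulerMeas_eq_map {m : ℕ} {v : ℝ → EuclideanSpace ℝ (Fin m) → EuclideanSpace ℝ (Fin m)}
    (μ₀ : Measure (EuclideanSpace ℝ (Fin m))) {s : ℝ} {k : ℕ}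
    (hv : ∀ j < k, Continuous (v (j * s))) :
    eulerMeas v μ₀ s k = μ₀.map (eulerMap v s k) := by
  induction k with
  | zero => exact Measure.map_id.symm
  | succ k ih =>
    have hk := continuous_eulerMap fun j hj => hv j (Nat.lt_succ_of_lt hj)
    have hstep : Continuous fun x => x + s • v (k * s) x :=
      continuous_id.add ((hv k (Nat.lt_succ_self k)).const_smul s)
    rw [eulerMeas, ih fun j hj => hv j (Nat.lt_succ_of_lt hj),
      Measure.map_map hstep.measurable hk.measurable]
    rfl

lemma eulerInterp_eq_map {m : ℕ} {v : ℝ → EuclideanSpace ℝ (Fin m) → EuclideanSpace ℝ (Fin m)}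
    (μ₀ : Measure (EuclideanSpace ℝ (Fin m))) {s t : ℝ}
    (hv : ∀ j ≤ ⌊t / s⌋₊, Continuous (v (j * s))) :
    eulerInterp v μ₀ s t = μ₀.map (eulerInterpMap v s t) := by
  have hk := continuous_eulerMap fun j hj => hv j hj.le
  have hstep : Continuous fun x => x + (t - ⌊t / s⌋₊ * s) • v (⌊t / s⌋₊ * s) x :=
    continuous_id.add ((hv _ le_rfl).const_smul (t - ⌊t / s⌋₊ * s))
  rw [eulerInterp, eulerMeas_eq_map μ₀ fun j hj => hv j hj.le,
    Measure.map_map hstep.measurable hk.measurable]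
  rfl

theorem euler_discretization_error_general {m : ℕ} (B L T : ℝ)
    (hL : 0 ≤ L)
    (v : ℝ → EuclideanSpace ℝ (Fin m) → EuclideanSpace ℝ (Fin m))
    (μ : ℝ → Measure (EuclideanSpace ℝ (Fin m)))
    [∀ t, IsProbabilityMeasure (μ t)]
    (X : ℝ → EuclideanSpace ℝ (Fin m) → EuclideanSpace ℝ (Fin m))
    (hX0 : ∀ x, X 0 x = x)
    (hode : ∀ x t, HasDerivAt (fun τ => X τ x) (v t (X t x)) t)
    (hμ : ∀ t, μ t = (μ 0).map (X t))
    (hbound : ∀ t x, ‖v t x‖ ≤ B)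
    (hlip : ∀ t t', t ∈ Set.Icc 0 T → t' ∈ Set.Icc 0 T → ∀ x x',
      ‖v t x - v t' x'‖ ≤ L * (‖x - x'‖ + W2 (μ t) (μ t'))) :
    ∃ C : ℝ, 0 ≤ C ∧ ∀ s > 0, ∀ t ∈ Set.Icc 0 T,
      W2 (μ t) (eulerInterp v (μ 0) s t) ≤ C * s := by
  have hB : 0 ≤ B := (norm_nonneg _).trans (hbound 0 0)
  have hX : ∀ t, AEMeasurable (X t) (μ 0) := fun t =>
    .of_map_ne_zero (hμ t ▸ IsProbabilityMeasure.ne_zero (μ t))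
  have hW2 : ∀ a t, a ≤ t → W2 (μ t) (μ a) ≤ B * (t - a) := fun a t hat => by
    rw [hμ a, hμ t]
    exact W2_map_le_of_norm_sub_le _ (hX t) (hX a) (mul_nonneg hB (sub_nonneg.2 hat))
      fun x => norm_sub_le_mul_of_hasDerivAt (hode x) (fun τ => hbound τ _) hat
  have hvlip : ∀ a t, a ∈ Icc 0 T → t ∈ Icc 0 T → a ≤ t → ∀ x y,
      ‖v t x - v a y‖ ≤ L * (‖x - y‖ + B * (t - a)) := fun a t ha ht hat x y =>
    (hlip t a ht ha x y).trans (by gcongr; exact hW2 a t hat)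
  have hvcont : ∀ t ∈ Icc 0 T, Continuous (v t) := fun t ht =>
    (LipschitzWith.of_dist_le_mul (K := L.toNNReal) fun x y => by
      simpa [dist_eq_norm, Real.coe_toNNReal _ hL] using hvlip t t ht ht le_rfl x y).continuous
  refine ⟨2 * B * Real.exp (L * T), by positivity, fun s hs t ht => ?_⟩
  have hgrid : ∀ j ≤ ⌊t / s⌋₊, (j : ℝ) * s ∈ Icc 0 T := fun j hj =>
    ⟨by positivity, le_trans (by gcongr) ((natFloor_div_mul_le ht.1 hs).trans ht.2)⟩
  rw [eulerInterp_eq_map _ fun j hj => hvcont _ (hgrid j hj), hμ t]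
  refine W2_map_le_of_norm_sub_le _ (hX t)
    (continuous_eulerInterpMap fun j hj => hvcont _ (hgrid j hj)).aemeasurable
    (by positivity) fun x => ?_
  simpa [hX0] using norm_sub_eulerInterpMap_le hL hs (hode x) hbound hvlip ht

/-- Under a uniform bound `‖v_t‖ ≤ B` and joint Lipschitz continuity of the velocity fields
in `(x, μ_t)`, the forward Euler interpolation of the flow satisfies
`sup_{t ∈ [0,T]} W₂(μ_t, μ_t^s) ≤ C s` for a constant `C` depending only on `L, B, T`. -/
theorem euler_discretization_error {m : ℕ} (B L T : ℝ)
    (hB : 0 ≤ B) (hL : 0 ≤ L) (hT : 0 < T)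
    (v : ℝ → EuclideanSpace ℝ (Fin m) → EuclideanSpace ℝ (Fin m))
    (μ : ℝ → Measure (EuclideanSpace ℝ (Fin m)))
    [∀ t, IsProbabilityMeasure (μ t)]
    (X : ℝ → EuclideanSpace ℝ (Fin m) → EuclideanSpace ℝ (Fin m))
    (hX0 : ∀ x, X 0 x = x)
    (hode : ∀ x t, HasDerivAt (fun τ => X τ x) (v t (X t x)) t)
    (hμ : ∀ t, μ t = (μ 0).map (X t))
    (hbound : ∀ t x, ‖v t x‖ ≤ B)
    (hlip : ∀ t t', t ∈ Set.Icc 0 T → t' ∈ Set.Icc 0 T → ∀ x x',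
      ‖v t x - v t' x'‖ ≤ L * (‖x - x'‖ + W2 (μ t) (μ t'))) :
    ∃ C : ℝ, 0 ≤ C ∧ ∀ s > 0, ∀ t ∈ Set.Icc 0 T,
      W2 (μ t) (eulerInterp v (μ 0) s t) ≤ C * s :=
  euler_discretization_error_general B L T hL v μ X hX0 hode hμ hbound hlip
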